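/- arXiv:2509.14655 — 3 statements merged into one kernel-verified Lean document; each statement's English description precedes it below -/
import Mathlib

section
/- Conversely, let H be a reproducing kernel Hilbert space on X with kernel K, let f : X → ℂ, and suppose that for some c > 0 the function (x,y) ↦ c²·K(x,y) − f(x)·conj(f(y)) is a positive semidefinite kernel on X. Then f belongs to H and ‖f‖ ≤ c. -/
open ComplexOrder

def IsPSDKernel {X : Type*} (K : X → X → ℂ) : Prop :=
  ∀ (n : ℕ) (x : Fin n → X) (c : Fin n → ℂ),
    0 ≤ ∑ i, ∑ j, c i * (starRingEnd ℂ) (c j) * K (x i) (x j)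

theorem mem_of_kernel_sub_rankOne {X H : Type*} [Nonempty X]
    [NormedAddCommGroup H] [InnerProductSpace ℂ H] [CompleteSpace H]
    (ev : H →ₗ[ℂ] (X → ℂ)) (Kf : X → H)
    (hrep : ∀ (f : H) (w : X), ev f w = inner ℂ (Kf w) f)
    (hdense : (Submodule.span ℂ (Set.range Kf)).topologicalClosure = ⊤)
    (f : X → ℂ) (c : ℝ) (hc : 0 < c)
    (hker : IsPSDKernel (fun x y =>
      (c : ℂ) ^ 2 * ev (Kf y) x - f x * (starRingEnd ℂ) (f y))) :
    ∃ g : H, ev g = f ∧ ‖g‖ ≤ c := by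
  classical
  set T : (X →₀ ℂ) →ₗ[ℂ] H := Finsupp.linearCombination ℂ Kf with hT
  set L : (X →₀ ℂ) →ₗ[ℂ] ℂ :=
    Finsupp.linearCombination ℂ (fun x => (starRingEnd ℂ) (f x)) with hL
  -- the key bound
  have key : ∀ a : X →₀ ℂ, ‖L a‖ ≤ c * ‖T a‖ := by
    intro a
    set s := a.support with hs
    -- Finset version of the PSD hypothesis
    have conv : ∀ h : X → ℂ,
        (∑ i : Fin s.card, h ((s.equivFin.symm i : X))) = ∑ x ∈ s, h x := by
      intro h
      rw [← Finset.sum_coe_sort s h]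
      exact Equiv.sum_comp s.equivFin.symm (fun x : s => h (x : X))
    have h0 : (0 : ℂ) ≤ ∑ x ∈ s, ∑ y ∈ s,
        (starRingEnd ℂ) (a x) * a y *
          ((c : ℂ) ^ 2 * ev (Kf y) x - f x * (starRingEnd ℂ) (f y)) := by
      have h1 := hker s.card (fun i => (s.equivFin.symm i : X))
        (fun i => (starRingEnd ℂ) (a ((s.equivFin.symm i : X))))
      simp only [RingHomCompTriple.comp_apply, RingHom.id_apply,
        Complex.conj_conj, starRingEnd_apply, star_star] at h1
      calc (0 : ℂ) ≤ _ := h1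
        _ = _ := by
          rw [← conv (fun x => ∑ y ∈ s,
            (starRingEnd ℂ) (a x) * a y *
              ((c : ℂ) ^ 2 * ev (Kf y) x - f x * (starRingEnd ℂ) (f y)))]
          refine Finset.sum_congr rfl fun i _ => ?_
          rw [← conv (fun y => (starRingEnd ℂ) (a ((s.equivFin.symm i : X))) * a y *
            ((c : ℂ) ^ 2 * ev (Kf y) ((s.equivFin.symm i : X)) -
              f ((s.equivFin.symm i : X)) * (starRingEnd ℂ) (f y)))]
          simp only [starRingEnd_apply]
    -- expand the double sum
    have hTa : T a = ∑ x ∈ s, a x • Kf x := by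
      rw [hT, Finsupp.linearCombination_apply, Finsupp.sum]
    have hLa : L a = ∑ x ∈ s, a x * (starRingEnd ℂ) (f x) := by
      rw [hL, Finsupp.linearCombination_apply, Finsupp.sum]
      simp [smul_eq_mul]
      rfl
    have hinner : (inner ℂ (T a) (T a) : ℂ) =
        ∑ x ∈ s, ∑ y ∈ s, (starRingEnd ℂ) (a x) * a y * ev (Kf y) x := by
      rw [hTa, sum_inner]
      refine Finset.sum_congr rfl fun x _ => ?_
      rw [inner_smul_left, inner_sum, Finset.mul_sum]
      refine Finset.sum_congr rfl fun y _ => ?_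
      rw [inner_smul_right, hrep]
      ring
    have hFF : (starRingEnd ℂ) (L a) * L a =
        ∑ x ∈ s, ∑ y ∈ s, (starRingEnd ℂ) (a x) * a y *
          (f x * (starRingEnd ℂ) (f y)) := by
      rw [hLa, map_sum, Finset.sum_mul_sum]
      refine Finset.sum_congr rfl fun x _ => Finset.sum_congr rfl fun y _ => ?_
      simp only [map_mul, Complex.conj_conj]
      ring
    have hexp : (∑ x ∈ s, ∑ y ∈ s,
        (starRingEnd ℂ) (a x) * a y *
          ((c : ℂ) ^ 2 * ev (Kf y) x - f x * (starRingEnd ℂ) (f y))) =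
        (c : ℂ) ^ 2 * inner ℂ (T a) (T a) - (starRingEnd ℂ) (L a) * L a := by
      rw [hinner, hFF, Finset.mul_sum, ← Finset.sum_sub_distrib]
      refine Finset.sum_congr rfl fun x _ => ?_
      rw [Finset.mul_sum, ← Finset.sum_sub_distrib]
      refine Finset.sum_congr rfl fun y _ => ?_
      ring
    rw [hexp] at h0
    rw [inner_self_eq_norm_sq_to_K, RCLike.conj_mul] at h0
    have h2 : (0 : ℂ) ≤ ((c ^ 2 * ‖T a‖ ^ 2 - ‖L a‖ ^ 2 : ℝ) : ℂ) := by
      push_cast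
      convert h0 using 1
      exact rfl
    rw [Complex.zero_le_real] at h2
    nlinarith [norm_nonneg (L a), norm_nonneg (T a), hc.le,
      mul_nonneg hc.le (norm_nonneg (T a))]
  -- L factors through the range of T
  have hle : LinearMap.ker T ≤ LinearMap.ker L := by
    intro a ha
    rw [LinearMap.mem_ker] at ha ⊢
    have := key a
    rw [ha, norm_zero, mul_zero] at this
    exact norm_le_zero_iff.mp this
  let φ₀ : LinearMap.range T →ₗ[ℂ] ℂ :=
    ((LinearMap.ker T).liftQ L hle).comp (T.quotKerEquivRange.symm : _ →ₗ[ℂ] _)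
  have hφ₀ : ∀ a : X →₀ ℂ, φ₀ ⟨T a, LinearMap.mem_range_self T a⟩ = L a := by
    intro a
    have : T.quotKerEquivRange.symm ⟨T a, LinearMap.mem_range_self T a⟩ =
        Submodule.Quotient.mk a := by
      rw [LinearEquiv.symm_apply_eq]
      exact Subtype.ext (LinearMap.quotKerEquivRange_apply_mk T a).symm
    simp only [φ₀, LinearMap.coe_comp, LinearEquiv.coe_coe, Function.comp_apply, this,
      Submodule.liftQ_apply]
  have hφ₀bound : ∀ v : LinearMap.range T, ‖φ₀ v‖ ≤ c * ‖v‖ := by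
    rintro ⟨v, a, rfl⟩
    rw [hφ₀ a]
    exact key a
  let φ₀c : LinearMap.range T →L[ℂ] ℂ := φ₀.mkContinuous c hφ₀bound
  -- extend to all of H by density
  let e : (LinearMap.range T : Submodule ℂ H) →L[ℂ] H := (LinearMap.range T).subtypeL
  have hrange : LinearMap.range T = Submodule.span ℂ (Set.range Kf) := by
    rw [hT]; exact Finsupp.range_linearCombination ℂ
  have h_dense : DenseRange e := by
    have : Dense ((LinearMap.range T : Submodule ℂ H) : Set H) := by
      rw [hrange]
      exact Submodule.dense_iff_topologicalClosure_eq_top.mpr hdense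
    exact this.denseRange_val
  have h_iso : ∀ v : (LinearMap.range T : Submodule ℂ H), ‖v‖ ≤ (1 : NNReal) * ‖e v‖ := by
    intro v; simp [e]
  let φ : H →L[ℂ] ℂ := φ₀c.extend e
  have hφnorm : ‖φ‖ ≤ c := by
    have h1 := ContinuousLinearMap.opNorm_extend_le (f := φ₀c) (e := e) (h_dense := h_dense)
      (h_e := h_iso)
    have h2 : ‖φ₀c‖ ≤ c := LinearMap.mkContinuous_norm_le _ hc.le _
    calc ‖φ‖ ≤ (1 : NNReal) * ‖φ₀c‖ := h1
      _ ≤ c := by simpa using h2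
  have hφeq : ∀ w : X, φ (Kf w) = (starRingEnd ℂ) (f w) := by
    intro w
    have hmem : Kf w ∈ LinearMap.range T := by
      refine ⟨Finsupp.single w 1, ?_⟩
      rw [hT, Finsupp.linearCombination_single, one_smul]
    have h1 : Kf w = e ⟨Kf w, hmem⟩ := rfl
    rw [h1, ContinuousLinearMap.extend_eq (h_dense := h_dense)
      (h_e := (ContinuousLinearMap.isUniformEmbedding_of_bound _ h_iso).isUniformInducing)]
    have h2 : φ₀c ⟨Kf w, hmem⟩ = L (Finsupp.single w 1) := by
      have : (⟨Kf w, hmem⟩ : LinearMap.range T) =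
          ⟨T (Finsupp.single w 1), LinearMap.mem_range_self T _⟩ := by
        ext
        show Kf w = T (Finsupp.single w 1)
        rw [hT, Finsupp.linearCombination_single, one_smul]
      show φ₀ _ = _
      rw [this, hφ₀]
    rw [h2, hL, Finsupp.linearCombination_single, one_smul]
  refine ⟨(InnerProductSpace.toDual ℂ H).symm φ, ?_, ?_⟩
  · funext w
    rw [hrep, ← inner_conj_symm, InnerProductSpace.toDual_symm_apply, hφeq,
      Complex.conj_conj]
  · rw [LinearIsometryEquiv.norm_map]
    exact hφnorm
end

section
/- Let K₁ be a kernel on X₁, K₂ a kernel on X₂, φ : X₂ → X₁ and ψ : X₂ → ℂ. If for some c > 0 the function (x,y) ↦ c²K₂(x,y) − ψ(x)·conj(ψ(y))·K₁(φ(x),φ(y)) is a positive semidefinite kernel on X₂, then the weighted composition operator W_{φ,ψ} : H(K₁) → H(K₂), f ↦ ψ·(f∘φ), is well-defined and bounded with ‖W_{φ,ψ}‖ ≤ c. -/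
open ComplexOrder

theorem weightedComp_bounded_of_kernel {X₁ X₂ H₁ H₂ : Type*}
    [NormedAddCommGroup H₁] [InnerProductSpace ℂ H₁] [CompleteSpace H₁]
    [NormedAddCommGroup H₂] [InnerProductSpace ℂ H₂] [CompleteSpace H₂]
    (ev₁ : H₁ →ₗ[ℂ] (X₁ → ℂ)) (Kf₁ : X₁ → H₁)
    (hrep₁ : ∀ (f : H₁) (w : X₁), ev₁ f w = inner ℂ (Kf₁ w) f)
    (hdense₁ : (Submodule.span ℂ (Set.range Kf₁)).topologicalClosure = ⊤)
    (ev₂ : H₂ →ₗ[ℂ] (X₂ → ℂ)) (Kf₂ : X₂ → H₂)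
    (hrep₂ : ∀ (f : H₂) (w : X₂), ev₂ f w = inner ℂ (Kf₂ w) f)
    (hdense₂ : (Submodule.span ℂ (Set.range Kf₂)).topologicalClosure = ⊤)
    (φ : X₂ → X₁) (ψ : X₂ → ℂ) (c : ℝ) (hc : 0 < c)
    (hker : IsPSDKernel (fun x y =>
      (c : ℂ) ^ 2 * ev₂ (Kf₂ y) x -
        ψ x * (starRingEnd ℂ) (ψ y) * ev₁ (Kf₁ (φ y)) (φ x))) :
    ∀ f : H₁, ∃ g : H₂,
      ev₂ g = (fun x => ψ x * ev₁ f (φ x)) ∧ ‖g‖ ≤ c * ‖f‖ := by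
  intro f
  set F : (X₂ →₀ ℂ) →ₗ[ℂ] H₁ :=
    Finsupp.linearCombination ℂ (fun x => (starRingEnd ℂ) (ψ x) • Kf₁ (φ x)) with hF
  set G : (X₂ →₀ ℂ) →ₗ[ℂ] H₂ := Finsupp.linearCombination ℂ Kf₂ with hG
  -- key estimate
  have key : ∀ a : X₂ →₀ ℂ, ‖F a‖ ≤ c * ‖G a‖ := by
    intro a
    set n := a.support.card with hn
    set e : Fin n ≃ a.support := a.support.equivFin.symm with he
    set x : Fin n → X₂ := fun i => (e i : X₂) with hx
    have hpsd := hker n x (fun i => (starRingEnd ℂ) (a (x i)))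
    simp only at hpsd
    set u : H₂ := ∑ i, a (x i) • Kf₂ (x i) with hu
    set v : H₁ := ∑ i, (a (x i) * (starRingEnd ℂ) (ψ (x i))) • Kf₁ (φ (x i)) with hv
    have huu : (inner ℂ u u : ℂ) =
        ∑ i, ∑ j, (starRingEnd ℂ) (a (x i)) * a (x j) * inner ℂ (Kf₂ (x i)) (Kf₂ (x j)) := by
      rw [hu, sum_inner]
      refine Finset.sum_congr rfl fun i _ => ?_
      rw [inner_sum]
      refine Finset.sum_congr rfl fun j _ => ?_
      rw [inner_smul_left, inner_smul_right]; ring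
    have hvv : (inner ℂ v v : ℂ) =
        ∑ i, ∑ j, (starRingEnd ℂ) (a (x i)) * a (x j) *
          (ψ (x i) * (starRingEnd ℂ) (ψ (x j)) * inner ℂ (Kf₁ (φ (x i))) (Kf₁ (φ (x j)))) := by
      rw [hv, sum_inner]
      refine Finset.sum_congr rfl fun i _ => ?_
      rw [inner_sum]
      refine Finset.sum_congr rfl fun j _ => ?_
      rw [inner_smul_left, inner_smul_right]
      simp only [map_mul, RingHom.id_apply, starRingEnd_self_apply]
      ring
    have hsum : (c : ℂ) ^ 2 * inner ℂ u u - inner ℂ v v =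
        ∑ i, ∑ j, (starRingEnd ℂ) (a (x i)) * (starRingEnd ℂ) ((starRingEnd ℂ) (a (x j))) *
          ((c : ℂ) ^ 2 * ev₂ (Kf₂ (x j)) (x i) -
            ψ (x i) * (starRingEnd ℂ) (ψ (x j)) * ev₁ (Kf₁ (φ (x j))) (φ (x i))) := by
      rw [huu, hvv, Finset.mul_sum, ← Finset.sum_sub_distrib]
      refine Finset.sum_congr rfl fun i _ => ?_
      rw [Finset.mul_sum, ← Finset.sum_sub_distrib]
      refine Finset.sum_congr rfl fun j _ => ?_
      rw [hrep₂, hrep₁, starRingEnd_self_apply]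
      ring
    have hpos : (0 : ℂ) ≤ (c : ℂ) ^ 2 * inner ℂ u u - inner ℂ v v := by
      rw [hsum]; exact hpsd
    have hreal : ‖v‖ ^ 2 ≤ c ^ 2 * ‖u‖ ^ 2 := by
      rw [inner_self_eq_norm_sq_to_K u, inner_self_eq_norm_sq_to_K v] at hpos
      have : ((0 : ℝ) : ℂ) ≤ ((c ^ 2 * ‖u‖ ^ 2 - ‖v‖ ^ 2 : ℝ) : ℂ) := by
        push_cast
        convert hpos using 1 <;> norm_num
      rw [Complex.real_le_real] at this
      linarith
    have hFv : F a = v := by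
      rw [hF]
      rw [Finsupp.linearCombination_apply, Finsupp.sum, ← Finset.sum_coe_sort,
        ← Equiv.sum_comp e (fun t : a.support => a t • (starRingEnd ℂ) (ψ t) • Kf₁ (φ t)), hv]
      exact Finset.sum_congr rfl fun i _ => smul_smul _ _ _
    have hGu : G a = u := by
      rw [hG]
      rw [Finsupp.linearCombination_apply, Finsupp.sum, ← Finset.sum_coe_sort,
        ← Equiv.sum_comp e (fun t : a.support => a t • Kf₂ (t : X₂)), hu]
    rw [hFv, hGu]
    nlinarith [norm_nonneg u, norm_nonneg v, hc.le, mul_nonneg hc.le (norm_nonneg u), sq_nonneg (c * ‖u‖ - ‖v‖), sq_nonneg (c * ‖u‖ + ‖v‖)]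
  -- the functional
  set T : (X₂ →₀ ℂ) →ₗ[ℂ] ℂ := (innerSL ℂ f).toLinearMap.comp F with hT
  have hTval : ∀ a, T a = inner ℂ f (F a) := fun a => rfl
  have hTbound : ∀ a, ‖T a‖ ≤ (c * ‖f‖) * ‖G a‖ := by
    intro a
    rw [hTval]
    calc ‖(inner ℂ f (F a) : ℂ)‖ ≤ ‖f‖ * ‖F a‖ := norm_inner_le_norm f (F a)
      _ ≤ ‖f‖ * (c * ‖G a‖) := by
          exact mul_le_mul_of_nonneg_left (key a) (norm_nonneg f)
      _ = (c * ‖f‖) * ‖G a‖ := by ring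
  have hkerle : LinearMap.ker G ≤ LinearMap.ker T := by
    intro a ha
    rw [LinearMap.mem_ker] at ha ⊢
    have := hTbound a
    rw [ha, norm_zero, mul_zero] at this
    exact norm_le_zero_iff.mp this
  set q : ↥(LinearMap.range G) →ₗ[ℂ] ℂ :=
    ((LinearMap.ker G).liftQ T hkerle).comp (LinearMap.quotKerEquivRange G).symm.toLinearMap
    with hq
  have hqval : ∀ a : X₂ →₀ ℂ, q ⟨G a, LinearMap.mem_range_self G a⟩ = T a := by
    intro a
    rw [hq]
    simp only [LinearMap.comp_apply, LinearEquiv.coe_toLinearMap]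
    have : (LinearMap.quotKerEquivRange G).symm ⟨G a, LinearMap.mem_range_self G a⟩ =
        Submodule.Quotient.mk a := by
      rw [LinearEquiv.symm_apply_eq]
      rfl
    rw [this]
    rfl
  have hqbound : ∀ w : ↥(LinearMap.range G), ‖q w‖ ≤ (c * ‖f‖) * ‖w‖ := by
    rintro ⟨w, a, rfl⟩
    rw [hqval a]
    exact hTbound a
  set q' : ↥(LinearMap.range G) →L[ℂ] ℂ := LinearMap.mkContinuous q (c * ‖f‖) hqbound with hq'
  obtain ⟨ℓ, hℓ, hℓnorm⟩ := exists_extension_norm_eq (LinearMap.range G) q'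
  refine ⟨(InnerProductSpace.toDual ℂ H₂).symm ℓ, ?_, ?_⟩
  · funext w
    have hmem : Kf₂ w ∈ LinearMap.range G := ⟨Finsupp.single w 1, by simp [hG]⟩
    have h1 : ev₂ ((InnerProductSpace.toDual ℂ H₂).symm ℓ) w
        = inner ℂ (Kf₂ w) ((InnerProductSpace.toDual ℂ H₂).symm ℓ) := hrep₂ _ _
    have h2 : (inner ℂ ((InnerProductSpace.toDual ℂ H₂).symm ℓ) (Kf₂ w) : ℂ) = ℓ (Kf₂ w) := by
      rw [← InnerProductSpace.toDual_apply_apply, LinearIsometryEquiv.apply_symm_apply]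
    have h3 : ℓ (Kf₂ w) = q' ⟨Kf₂ w, hmem⟩ := hℓ ⟨Kf₂ w, hmem⟩
    have h4 : q' ⟨Kf₂ w, hmem⟩ = T (Finsupp.single w 1) := by
      have : (⟨Kf₂ w, hmem⟩ : ↥(LinearMap.range G)) =
          ⟨G (Finsupp.single w 1), LinearMap.mem_range_self G _⟩ := by
        ext; simp [hG]
      rw [hq', LinearMap.mkContinuous_apply, this, hqval]
    have h5 : T (Finsupp.single w 1) = (starRingEnd ℂ) (ψ w) * inner ℂ f (Kf₁ (φ w)) := by
      rw [hTval, hF]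
      simp [inner_smul_right]
    rw [h1, ← inner_conj_symm, h2, h3, h4, h5]
    rw [hrep₁, ← inner_conj_symm f (Kf₁ (φ w))]
    simp [mul_comm]
  · rw [LinearIsometryEquiv.norm_map, hℓnorm]
    exact LinearMap.mkContinuous_norm_le q (by positivity) hqbound
end

section
/- Conversely, if W_{φ,ψ} : H(K₁) → H(K₂), f ↦ ψ·(f∘φ), is a bounded operator with ‖W_{φ,ψ}‖ ≤ c, then (x,y) ↦ c²K₂(x,y) − ψ(x)·conj(ψ(y))·K₁(φ(x),φ(y)) is a positive semidefinite kernel on X₂. -/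
open ComplexOrder

theorem kernel_of_weightedComp_bounded {X₁ X₂ H₁ H₂ : Type*}
    [NormedAddCommGroup H₁] [InnerProductSpace ℂ H₁] [CompleteSpace H₁]
    [NormedAddCommGroup H₂] [InnerProductSpace ℂ H₂] [CompleteSpace H₂]
    (ev₁ : H₁ →ₗ[ℂ] (X₁ → ℂ)) (Kf₁ : X₁ → H₁)
    (hrep₁ : ∀ (f : H₁) (w : X₁), ev₁ f w = inner ℂ (Kf₁ w) f)
    (ev₂ : H₂ →ₗ[ℂ] (X₂ → ℂ)) (Kf₂ : X₂ → H₂)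
    (hrep₂ : ∀ (f : H₂) (w : X₂), ev₂ f w = inner ℂ (Kf₂ w) f)
    (φ : X₂ → X₁) (ψ : X₂ → ℂ) (c : ℝ)
    (W : H₁ →L[ℂ] H₂)
    (hW : ∀ (f : H₁) (x : X₂), ev₂ (W f) x = ψ x * ev₁ f (φ x))
    (hnorm : ‖W‖ ≤ c) :
    IsPSDKernel (fun x y =>
      (c : ℂ) ^ 2 * ev₂ (Kf₂ y) x -
        ψ x * (starRingEnd ℂ) (ψ y) * ev₁ (Kf₁ (φ y)) (φ x)) := by
  intro n x cf
  have hc0 : (0:ℝ) ≤ c := le_trans (norm_nonneg W) hnorm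
  have hadj : ∀ y, (ContinuousLinearMap.adjoint W) (Kf₂ y)
      = (starRingEnd ℂ) (ψ y) • Kf₁ (φ y) := by
    intro y
    apply ext_inner_right ℂ
    intro f
    rw [ContinuousLinearMap.adjoint_inner_left, ← hrep₂, hW, hrep₁, inner_smul_left,
      Complex.conj_conj]
  set v : H₂ := ∑ i, (starRingEnd ℂ) (cf i) • Kf₂ (x i) with hv
  set u : H₁ := (ContinuousLinearMap.adjoint W) v with hu
  have hvv : (inner ℂ v v : ℂ)
      = ∑ i, ∑ j, cf i * (starRingEnd ℂ) (cf j) * inner ℂ (Kf₂ (x i)) (Kf₂ (x j)) := by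
    rw [hv, sum_inner]
    refine Finset.sum_congr rfl fun i _ => ?_
    rw [inner_sum]
    refine Finset.sum_congr rfl fun j _ => ?_
    rw [inner_smul_left, inner_smul_right, Complex.conj_conj]
    ring
  have hWv : u = ∑ i, ((starRingEnd ℂ) (cf i) * (starRingEnd ℂ) (ψ (x i))) • Kf₁ (φ (x i)) := by
    rw [hu, hv, map_sum]
    exact Finset.sum_congr rfl fun i _ => by rw [map_smul, hadj, smul_smul]
  have huu : (inner ℂ u u : ℂ)
      = ∑ i, ∑ j, cf i * (starRingEnd ℂ) (cf j) *
          (ψ (x i) * (starRingEnd ℂ) (ψ (x j)) * inner ℂ (Kf₁ (φ (x i))) (Kf₁ (φ (x j)))) := by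
    rw [hWv, sum_inner]
    refine Finset.sum_congr rfl fun i _ => ?_
    rw [inner_sum]
    refine Finset.sum_congr rfl fun j _ => ?_
    rw [inner_smul_left, inner_smul_right]
    simp only [map_mul, Complex.conj_conj]
    ring
  have h1 : ∑ i, ∑ j, cf i * (starRingEnd ℂ) (cf j) *
      ((c : ℂ) ^ 2 * ev₂ (Kf₂ (x j)) (x i) -
        ψ (x i) * (starRingEnd ℂ) (ψ (x j)) * ev₁ (Kf₁ (φ (x j))) (φ (x i)))
      = (c:ℂ)^2 * (inner ℂ v v : ℂ) - (inner ℂ u u : ℂ) := by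
    rw [hvv, huu, Finset.mul_sum, ← Finset.sum_sub_distrib]
    refine Finset.sum_congr rfl fun i _ => ?_
    rw [Finset.mul_sum, ← Finset.sum_sub_distrib]
    refine Finset.sum_congr rfl fun j _ => ?_
    rw [hrep₂, hrep₁]
    ring
  rw [h1, inner_self_eq_norm_sq_to_K, inner_self_eq_norm_sq_to_K]
  have h3 : ‖u‖ ≤ c * ‖v‖ := by
    calc ‖u‖ ≤ ‖ContinuousLinearMap.adjoint W‖ * ‖v‖ :=
          (ContinuousLinearMap.adjoint W).le_opNorm v
      _ ≤ c * ‖v‖ := by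
          rw [LinearIsometryEquiv.norm_map ContinuousLinearMap.adjoint W]
          exact mul_le_mul_of_nonneg_right hnorm (norm_nonneg v)
  have h4 : (0:ℝ) ≤ c^2 * ‖v‖^2 - ‖u‖^2 := by
    nlinarith [norm_nonneg u, norm_nonneg v, mul_nonneg hc0 (norm_nonneg v)]
  calc (0:ℂ) ≤ ((c^2 * ‖v‖^2 - ‖u‖^2 : ℝ) : ℂ) := Complex.zero_le_real.mpr h4
    _ = _ := by rw [Complex.ofReal_sub, Complex.ofReal_mul, Complex.ofReal_pow, Complex.ofReal_pow, Complex.ofReal_pow]; rfl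
end
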